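/- arXiv:1203.2396 — 2 statements merged into one kernel-verified Lean document; each statement's English description precedes it below -/
import Mathlib

section
/- If F : [0,∞) → ℝ is C², F(0) > 0, F'(0) > 0, F''(t) ≥ C·F(t)^γ for all t ≥ 0 (C > 0, γ > 1), and additionally F'(0)² ≥ (2C/(γ+1))·F(0)^{γ+1}, then F'(t)² ≥ (2C/(γ+1))·F(t)^{γ+1} for all t ≥ 0. -/
/-!
As long as `F` and `F'` are positive, `F'' ≥ C F^γ > 0` makes both of them increase, so by a
first-exit argument they stay positive on `[0, ∞)`. Then the energy
`E = F'^2 - 2C/(γ+1) F^(γ+1)` satisfies `E' = 2 F' (F'' - C F^γ) ≥ 0`, so `E t ≥ E 0 ≥ 0`.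
-/

open Set

theorem monotoneOn_of_hasDerivAt_nonneg {D : Set ℝ} (hD : Convex ℝ D) {f f' : ℝ → ℝ}
    (hf : ∀ x ∈ D, HasDerivAt f (f' x) x) (hf' : ∀ x ∈ interior D, 0 ≤ f' x) :
    MonotoneOn f D :=
  monotoneOn_of_hasDerivWithinAt_nonneg hD
    (fun x hx => (hf x hx).continuousAt.continuousWithinAt)
    (fun x hx => (hf x (interior_subset hx)).hasDerivWithinAt) hf'

theorem forall_ge_of_isClosed_of_forall_Ico {p : ℝ → Prop} {a : ℝ}
    (hclosed : IsClosed {t | a ≤ t ∧ ¬ p t})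
    (hstep : ∀ T, a ≤ T → (∀ s ∈ Ico a T, p s) → p T) : ∀ t, a ≤ t → p t := by
  by_contra! ⟨t, ht, hpt⟩
  have hbdd : BddBelow {t | a ≤ t ∧ ¬ p t} := ⟨a, fun _ hs => hs.1⟩
  have hinf := hclosed.csInf_mem ⟨t, ht, hpt⟩ hbdd
  exact hinf.2 <| hstep _ hinf.1 fun s hs =>
    by_contra fun hps => (csInf_le hbdd ⟨hs.1, hps⟩).not_gt hs.2

theorem pos_of_second_deriv_pos {F F' F'' : ℝ → ℝ}
    (hd1 : ∀ t, 0 ≤ t → HasDerivAt F (F' t) t)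
    (hd2 : ∀ t, 0 ≤ t → HasDerivAt F' (F'' t) t)
    (hF0 : 0 < F 0) (hF'0 : 0 < F' 0)
    (hF'' : ∀ t, 0 ≤ t → 0 < F t → 0 < F'' t) :
    ∀ t, 0 ≤ t → 0 < F t ∧ 0 < F' t := by
  have hmin : ContinuousOn (fun t => min (F t) (F' t)) (Ici 0) := fun t ht =>
    ((hd1 t ht).continuousAt.continuousWithinAt).min (hd2 t ht).continuousAt.continuousWithinAt
  suffices h : ∀ t, 0 ≤ t → 0 < min (F t) (F' t) from fun t ht => lt_min_iff.1 (h t ht)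
  refine forall_ge_of_isClosed_of_forall_Ico ?_ fun T hT hpos => ?_
  · simp only [not_lt]
    exact hmin.preimage_isClosed_of_isClosed isClosed_Ici isClosed_Iic
  have hpos' : ∀ x ∈ interior (Icc 0 T), 0 < F x ∧ 0 < F' x := fun x hx => by
    rw [interior_Icc] at hx
    exact lt_min_iff.1 (hpos x (Ioo_subset_Ico_self hx))
  have hF'mono : F' 0 ≤ F' T :=
    monotoneOn_of_hasDerivAt_nonneg (convex_Icc 0 T) (fun x hx => hd2 x hx.1)
      (fun x hx => (hF'' x (interior_subset hx).1 (hpos' x hx).1).le)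
      (left_mem_Icc.2 hT) (right_mem_Icc.2 hT) hT
  have hFmono : F 0 ≤ F T :=
    monotoneOn_of_hasDerivAt_nonneg (convex_Icc 0 T) (fun x hx => hd1 x hx.1)
      (fun x hx => (hpos' x hx).2.le) (left_mem_Icc.2 hT) (right_mem_Icc.2 hT) hT
  exact lt_min (hF0.trans_le hFmono) (hF'0.trans_le hF'mono)

noncomputable def energy (C γ : ℝ) (F F' : ℝ → ℝ) (t : ℝ) : ℝ :=
  F' t ^ 2 - 2 * C / (γ + 1) * F t ^ (γ + 1)

section Energy

variable {C γ : ℝ} {F F' F'' : ℝ → ℝ}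

theorem hasDerivAt_energy (hγ : 0 ≤ γ) {t : ℝ} (hd1 : HasDerivAt F (F' t) t)
    (hd2 : HasDerivAt F' (F'' t) t) :
    HasDerivAt (energy C γ F F') (2 * F' t * (F'' t - C * F t ^ γ)) t := by
  have hrpow : HasDerivAt (fun s => F s ^ (γ + 1)) ((γ + 1) * F t ^ γ * F' t) t := by
    have h := (Real.hasDerivAt_rpow_const (x := F t) (p := γ + 1) (Or.inr (by linarith))).comp t hd1
    rwa [add_sub_cancel_right] at h
  have hγ1 : γ + 1 ≠ 0 := by positivity
  exact ((hd2.pow 2).sub (hrpow.const_mul (2 * C / (γ + 1)))).congr_deriv (by field_simp; ring)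

theorem energy_monotoneOn (hγ : 0 ≤ γ)
    (hd1 : ∀ t, 0 ≤ t → HasDerivAt F (F' t) t)
    (hd2 : ∀ t, 0 ≤ t → HasDerivAt F' (F'' t) t)
    (hF' : ∀ t, 0 ≤ t → 0 ≤ F' t)
    (hineq : ∀ t, 0 ≤ t → C * F t ^ γ ≤ F'' t) :
    MonotoneOn (energy C γ F F') (Ici 0) := by
  refine monotoneOn_of_hasDerivAt_nonneg (convex_Ici 0)
    (fun t ht => hasDerivAt_energy hγ (hd1 t ht) (hd2 t ht)) fun t ht => ?_
  rw [interior_Ici] at ht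
  exact mul_nonneg (mul_nonneg zero_le_two (hF' t ht.le)) (sub_nonneg.2 (hineq t ht.le))

end Energy

theorem stmt1_general (C γ : ℝ) (hC : 0 < C) (hγ : 1 < γ)
    (F F' F'' : ℝ → ℝ)
    (hd1 : ∀ t, 0 ≤ t → HasDerivAt F (F' t) t)
    (hd2 : ∀ t, 0 ≤ t → HasDerivAt F' (F'' t) t)
    (hF0 : 0 < F 0) (hF'0 : 0 < F' 0)
    (hineq : ∀ t, 0 ≤ t → C * F t ^ γ ≤ F'' t)
    (hinit : (2 * C / (γ + 1)) * F 0 ^ (γ + 1) ≤ (F' 0) ^ 2) :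
    ∀ t, 0 ≤ t → (2 * C / (γ + 1)) * F t ^ (γ + 1) ≤ (F' t) ^ 2 := by
  intro t ht
  have hpos := pos_of_second_deriv_pos hd1 hd2 hF0 hF'0 fun s hs hFs =>
    (mul_pos hC (Real.rpow_pos_of_pos hFs γ)).trans_le (hineq s hs)
  have hE : energy C γ F F' 0 ≤ energy C γ F F' t :=
    energy_monotoneOn (by linarith) hd1 hd2 (fun s hs => (hpos s hs).2.le) hineq
      self_mem_Ici ht ht
  simp only [energy] at hE
  linarith

theorem stmt1 (C γ : ℝ) (hC : 0 < C) (hγ : 1 < γ)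
    (F F' F'' : ℝ → ℝ)
    (hd1 : ∀ t, 0 ≤ t → HasDerivAt F (F' t) t)
    (hd2 : ∀ t, 0 ≤ t → HasDerivAt F' (F'' t) t)
    (hcont : ContinuousOn F'' (Set.Ici 0))
    (hF0 : 0 < F 0) (hF'0 : 0 < F' 0)
    (hineq : ∀ t, 0 ≤ t → C * F t ^ γ ≤ F'' t)
    (hinit : (2 * C / (γ + 1)) * F 0 ^ (γ + 1) ≤ (F' 0) ^ 2) :
    ∀ t, 0 ≤ t → (2 * C / (γ + 1)) * F t ^ (γ + 1) ≤ (F' t) ^ 2 :=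
  stmt1_general C γ hC hγ F F' F'' hd1 hd2 hF0 hF'0 hineq hinit
end

section
/- Define K₀'(r) = −∫₀^∞ e^{-r·cosh t}·cosh t dt for r > 0 (the derivative of K₀). Then |K₀'(r)| ≤ 2 + 1/(2r²) for all r > 0. -/
/-!
Since `sinh t ≤ cosh t`, the integrand `exp (-r cosh t) cosh t` is dominated by
`cosh t · exp (-r sinh t)`, the derivative of `-exp (-r sinh t) / r`, whose integral over
`(0, ∞)` is `1 / r`; and `1 / r ≤ 2 + 1 / (2 r²)` since `4 r² - 2 r + 1 > 0`.
-/

open MeasureTheory Real Filter Set Topology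

lemma tendsto_sinh_atTop : Tendsto sinh atTop atTop :=
  tendsto_atTop_mono' _ ((eventually_ge_atTop 0).mono fun _ hx => self_le_sinh_iff.mpr hx)
    tendsto_id

lemma tendsto_exp_neg_mul_sinh_atTop {r : ℝ} (hr : 0 < r) :
    Tendsto (fun t => exp (-r * sinh t)) atTop (𝓝 0) := by
  refine tendsto_exp_atBot.comp ?_
  simp only [neg_mul]
  exact tendsto_neg_atBot_iff.mpr (tendsto_sinh_atTop.const_mul_atTop hr)

lemma hasDerivAt_neg_exp_neg_mul_sinh_div {r : ℝ} (hr : r ≠ 0) (t : ℝ) :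
    HasDerivAt (fun t => -exp (-r * sinh t) / r) (cosh t * exp (-r * sinh t)) t := by
  have h : HasDerivAt (fun t => -exp (-r * sinh t) / r)
      (-(exp (-r * sinh t) * (-r * cosh t)) / r) t :=
    (((hasDerivAt_sinh t).const_mul (-r)).exp.neg).div_const r
  convert h using 1
  field_simp

lemma integrableOn_cosh_mul_exp_neg_mul_sinh {r : ℝ} (hr : 0 < r) :
    IntegrableOn (fun t => cosh t * exp (-r * sinh t)) (Ioi 0) :=
  integrableOn_Ioi_deriv_of_nonneg' (fun t _ => hasDerivAt_neg_exp_neg_mul_sinh_div hr.ne' t)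
    (fun t _ => by positivity) ((tendsto_exp_neg_mul_sinh_atTop hr).neg.div_const r)

lemma integral_cosh_mul_exp_neg_mul_sinh {r : ℝ} (hr : 0 < r) :
    ∫ t in Ioi 0, cosh t * exp (-r * sinh t) = 1 / r := by
  rw [integral_Ioi_of_hasDerivAt_of_nonneg'
    (fun t _ => hasDerivAt_neg_exp_neg_mul_sinh_div hr.ne' t)
    (fun t _ => by positivity) ((tendsto_exp_neg_mul_sinh_atTop hr).neg.div_const r)]
  simp only [sinh_zero, mul_zero, exp_zero]
  ring

lemma exp_neg_mul_cosh_mul_cosh_le {r : ℝ} (hr : 0 ≤ r) (t : ℝ) :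
    exp (-r * cosh t) * cosh t ≤ cosh t * exp (-r * sinh t) := by
  rw [mul_comm]
  exact mul_le_mul_of_nonneg_left (exp_le_exp.mpr (by nlinarith [sinh_lt_cosh t])) (cosh_pos t).le

lemma integral_exp_neg_mul_cosh_mul_cosh_nonneg (r : ℝ) :
    0 ≤ ∫ t in Ioi 0, exp (-r * cosh t) * cosh t :=
  setIntegral_nonneg measurableSet_Ioi fun t _ => by positivity

lemma integral_exp_neg_mul_cosh_mul_cosh_le {r : ℝ} (hr : 0 < r) :
    ∫ t in Ioi 0, exp (-r * cosh t) * cosh t ≤ 1 / r := by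
  rw [← integral_cosh_mul_exp_neg_mul_sinh hr]
  exact integral_mono_of_nonneg (.of_forall fun t => by positivity)
    (integrableOn_cosh_mul_exp_neg_mul_sinh hr)
    (.of_forall (exp_neg_mul_cosh_mul_cosh_le hr.le))

lemma one_div_le_two_add_one_div_two_mul_sq {r : ℝ} (hr : 0 < r) :
    1 / r ≤ 2 + 1 / (2 * r ^ 2) := by
  have h : 2 + 1 / (2 * r ^ 2) - 1 / r = ((2 * r - 1) ^ 2 + 2 * r) / (2 * r ^ 2) := by
    field_simp
    ring
  rw [← sub_nonneg, h]
  positivity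

theorem stmt9 (r : ℝ) (hr : 0 < r) :
    |-(∫ t in Set.Ioi (0:ℝ), Real.exp (-r * Real.cosh t) * Real.cosh t)|
      ≤ 2 + 1 / (2 * r ^ 2) := by
  rw [abs_neg, abs_of_nonneg (integral_exp_neg_mul_cosh_mul_cosh_nonneg r)]
  exact (integral_exp_neg_mul_cosh_mul_cosh_le hr).trans
    (one_div_le_two_add_one_div_two_mul_sq hr)
end
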